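/- (Theorem 5, risk-averse valid inequality.) Let Ω be a finite scenario set, f^ω monotone k-submodular with f^ω(∅) = 0 for each ω, ξ^ω ∈ {0,1}^n, Ŝ^ω ∈ X(N,k) with orderings Ŝ^ω_q = {i^ω_{q,1},…,i^ω_{q,T^ω_q}}, and 𝔓 a nonempty set of probability vectors on Ω. Let p̂ ∈ argmax_{p ∈ 𝔓} Σ_ω p_ω f^ω(Ŝ^ω). For any x ∈ {0,1}^{k×n}, with S̄^ω_q = Ŝ^ω_q \ {i : x_{q,i} ξ^ω_i = 1}: max_{p ∈ 𝔓} Σ_ω p_ω f^ω(S̄^ω) ≥ Σ_ω p̂_ω f^ω(Ŝ^ω) − Σ_{q=1}^k Σ_{ω ∈ Ω} Σ_{t=1}^{T^ω_q} p̂_ω ρ^ω_{q,i^ω_{q,t}}(Ŝ^ω_{q,(t)}) ξ^ω_{i^ω_{q,t}} x_{q,i^ω_{q,t}}. -/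

import Mathlib

open Finset

/-- A `k`-tuple of subsets of `N` is "k-disjoint" if its components are pairwise disjoint,
i.e. it belongs to `X(N,k)`. -/
def IsKDisjoint {N : Type*} {k : ℕ} (S : Fin k → Finset N) : Prop :=
  ∀ q q' : Fin k, q ≠ q' → Disjoint (S q) (S q')

/-- Componentwise intersection `X ⊓ Y`. -/
def kInf {N : Type*} [DecidableEq N] {k : ℕ} (X Y : Fin k → Finset N) : Fin k → Finset N :=
  fun q => X q ∩ Y q

/-- The operation `X ⊔ Y`, whose `q`-th component is
`(X_q ∪ Y_q) \ ⋃_{p ≠ q} (X_p ∪ Y_p)`. -/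
def kSup {N : Type*} [DecidableEq N] {k : ℕ} (X Y : Fin k → Finset N) : Fin k → Finset N :=
  fun q => (X q ∪ Y q) \ ((Finset.univ.erase q).biUnion fun p => X p ∪ Y p)

/-- `f` is a `k`-submodular function on `X(N,k)`. -/
def KSubmodular {N : Type*} [DecidableEq N] {k : ℕ} (f : (Fin k → Finset N) → ℝ) : Prop :=
  ∀ X Y : Fin k → Finset N, IsKDisjoint X → IsKDisjoint Y →
    f (kInf X Y) + f (kSup X Y) ≤ f X + f Y

/-- `f` is monotone on `X(N,k)` with respect to componentwise inclusion. -/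
def KMonotone {N : Type*} [DecidableEq N] {k : ℕ} (f : (Fin k → Finset N) → ℝ) : Prop :=
  ∀ X Y : Fin k → Finset N, IsKDisjoint X → IsKDisjoint Y →
    (∀ r, X r ⊆ Y r) → f X ≤ f Y

/-- Marginal gain `ρ_{q,i}(X) = f(X_1,…,X_q ∪ {i},…,X_k) − f(X)`. -/
def marg {N : Type*} [DecidableEq N] {k : ℕ} (f : (Fin k → Finset N) → ℝ)
    (X : Fin k → Finset N) (q : Fin k) (i : N) : ℝ :=
  f (Function.update X q (insert i (X q))) - f X

/-- The partial tuple `S_{q,(t)}`: components before `q` are kept in full, the `q`-th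
component consists of the first `t` elements of the ordering `L q` of `S q`, and
later components are empty. -/
def partialTuple {N : Type*} [DecidableEq N] {k : ℕ} (S : Fin k → Finset N)
    (L : Fin k → List N) (q : Fin k) (t : ℕ) : Fin k → Finset N :=
  fun r => if r < q then S r else if r = q then ((L q).take t).toFinset else ∅

section Aux

variable {N : Type*} [DecidableEq N] {k : ℕ}

lemma isKDisjoint_mono {S T : Fin k → Finset N} (hS : IsKDisjoint S)
    (h : ∀ r, T r ⊆ S r) : IsKDisjoint T :=
  fun q q' hq => (hS q q' hq).mono (h q) (h q')

lemma isKDisjoint_update_insert {Y : Fin k → Finset N} (hY : IsKDisjoint Y)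
    (q : Fin k) (i : N) (hi : ∀ r, i ∉ Y r) :
    IsKDisjoint (Function.update Y q (insert i (Y q))) := by
  intro p p' hne
  rcases eq_or_ne p q with hp | hp <;> rcases eq_or_ne p' q with hp' | hp'
  · exact absurd (hp.trans hp'.symm) hne
  · subst hp
    rw [Function.update_self, Function.update_of_ne hp']
    exact Finset.disjoint_insert_left.mpr ⟨hi p', hY p p' hne⟩
  · subst hp'
    rw [Function.update_self, Function.update_of_ne hp]
    exact Finset.disjoint_insert_right.mpr ⟨hi p, hY p p' hne⟩
  · rw [Function.update_of_ne hp, Function.update_of_ne hp']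
    exact hY p p' hne

lemma marg_antitone {f : (Fin k → Finset N) → ℝ} (hsub : KSubmodular f)
    {X Y : Fin k → Finset N} (hX : IsKDisjoint X) (hY : IsKDisjoint Y)
    (hXY : ∀ r, X r ⊆ Y r) {q : Fin k} {i : N} (hi : ∀ r, i ∉ Y r) :
    marg f Y q i ≤ marg f X q i := by
  set A := Function.update X q (insert i (X q)) with hA
  have hYup : IsKDisjoint (Function.update Y q (insert i (Y q))) :=
    isKDisjoint_update_insert hY q i hi
  have hAsub : ∀ r, A r ⊆ Function.update Y q (insert i (Y q)) r := by
    intro r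
    rcases eq_or_ne r q with h | h
    · subst h
      simp only [hA, Function.update_self]
      exact Finset.insert_subset_insert _ (hXY r)
    · simp only [hA, Function.update_of_ne h]
      exact hXY r
  have hAdisj : IsKDisjoint A := isKDisjoint_mono hYup hAsub
  have hinf : kInf A Y = X := by
    funext r
    rcases eq_or_ne r q with h | h
    · subst h
      simp only [kInf, hA, Function.update_self]
      rw [Finset.insert_inter_of_notMem (hi r), Finset.inter_eq_left.mpr (hXY r)]
    · simp only [kInf, hA, Function.update_of_ne h]
      exact Finset.inter_eq_left.mpr (hXY r)
  have hcomp : ∀ p, A p ∪ Y p = Function.update Y q (insert i (Y q)) p := by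
    intro p
    rcases eq_or_ne p q with h | h
    · subst h
      simp only [hA, Function.update_self]
      rw [Finset.insert_union, Finset.union_eq_right.mpr (hXY p)]
    · simp only [hA, Function.update_of_ne h]
      exact Finset.union_eq_right.mpr (hXY p)
  have hsup : kSup A Y = Function.update Y q (insert i (Y q)) := by
    funext r
    simp only [kSup]
    rw [hcomp r]
    have hb : ((Finset.univ.erase r).biUnion fun p => A p ∪ Y p)
        = (Finset.univ.erase r).biUnion fun p => Function.update Y q (insert i (Y q)) p :=
      Finset.biUnion_congr rfl (fun p _ => hcomp p)
    rw [hb, Finset.sdiff_eq_self_iff_disjoint, Finset.disjoint_biUnion_right]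
    intro p hp
    exact hYup r p (Ne.symm (Finset.ne_of_mem_erase hp))
  have hmain := hsub A Y hAdisj hY
  rw [hinf, hsup] at hmain
  simp only [marg, hA] at *
  linarith

lemma sum_if_lt_succ {n : ℕ} (c : Fin n → ℝ) {m : ℕ} (hm : m < n) :
    (∑ s : Fin n, if s.val < m + 1 then c s else 0)
      = (∑ s : Fin n, if s.val < m then c s else 0) + c ⟨m, hm⟩ := by
  have h : ∀ s : Fin n, (if s.val < m + 1 then c s else 0)
      = (if s.val < m then c s else 0) + (if s = ⟨m, hm⟩ then c s else 0) := by
    intro s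
    rcases lt_trichotomy s.val m with h | h | h
    · rw [if_pos (by omega), if_pos h, if_neg (by intro he; subst he; simp at h), add_zero]
    · have he : s = ⟨m, hm⟩ := Fin.ext h
      rw [if_pos (by omega), if_neg (by omega), if_pos he, zero_add]
    · rw [if_neg (by omega), if_neg (by omega),
        if_neg (by intro he; subst he; simp at h), add_zero]
  rw [Finset.sum_congr rfl (fun s _ => h s), Finset.sum_add_distrib,
    Finset.sum_ite_eq' Finset.univ (⟨m, hm⟩ : Fin n) c]
  simp

end Aux

section Key

variable {N : Type*} [DecidableEq N] {k : ℕ}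

lemma key_ineq {f : (Fin k → Finset N) → ℝ} (hsub : KSubmodular f)
    (hzero : f (fun _ => ∅) = 0)
    (S : Fin k → Finset N) (hS : IsKDisjoint S)
    (L : Fin k → List N) (hnd : ∀ q, (L q).Nodup) (hL : ∀ q, (L q).toFinset = S q)
    (keep : Fin k → N → Bool)
    (B : Fin k → Finset N) (hB : ∀ q, B q = (S q).filter (fun i => keep q i = true)) :
    f S ≤ f B + ∑ q : Fin k, ∑ t : Fin (L q).length,
      marg f (partialTuple S L q t.val) q ((L q).get t) *
        (if keep q ((L q).get t) then 0 else 1) := by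
  classical
  set g : (q : Fin k) → Fin (L q).length → ℝ := fun q t =>
    marg f (partialTuple S L q t.val) q ((L q).get t) *
      (if keep q ((L q).get t) then 0 else 1) with hg
  set bP : Fin k → ℕ → Fin k → Finset N := fun q t r =>
    if r < q then B r else if r = q then (((L q).take t).filter (keep q)).toFinset else ∅
    with hbP
  -- subset facts
  have hBsub : ∀ r, B r ⊆ S r := fun r => by rw [hB]; exact Finset.filter_subset _ _
  have htake_sub : ∀ (q : Fin k) (t : ℕ), ((L q).take t).toFinset ⊆ S q := by
    intro q t
    rw [← hL q]
    intro a ha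
    rw [List.mem_toFinset] at ha ⊢
    exact List.take_subset t (L q) ha
  have hpart_sub : ∀ (q : Fin k) (t : ℕ) (r : Fin k), partialTuple S L q t r ⊆ S r := by
    intro q t r
    simp only [partialTuple]
    split_ifs with h1 h2
    · exact subset_rfl
    · subst h2; exact htake_sub r t
    · exact Finset.empty_subset _
  have hbP_sub : ∀ (q : Fin k) (t : ℕ) (r : Fin k), bP q t r ⊆ partialTuple S L q t r := by
    intro q t r
    simp only [hbP, partialTuple]
    split_ifs with h1 h2
    · exact hBsub r
    · subst h2
      intro a ha
      rw [List.mem_toFinset] at ha ⊢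
      exact List.mem_of_mem_filter ha
    · exact subset_rfl
  have hpart_disj : ∀ q t, IsKDisjoint (partialTuple S L q t) :=
    fun q t => isKDisjoint_mono hS (hpart_sub q t)
  have hbP_disj : ∀ q t, IsKDisjoint (bP q t) :=
    fun q t => isKDisjoint_mono (hpart_disj q t) (hbP_sub q t)
  -- step identities
  have hpart_q : ∀ (q : Fin k) (t : ℕ), partialTuple S L q t q = ((L q).take t).toFinset := by
    intro q t; simp [partialTuple]
  have hbP_q : ∀ (q : Fin k) (t : ℕ), bP q t q = (((L q).take t).filter (keep q)).toFinset := by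
    intro q t; simp [hbP]
  have happend : ∀ (l : List N) (a : N), (l ++ [a]).toFinset = insert a l.toFinset := by
    intro l a
    ext b
    simp [or_comm]
  have htake1 : ∀ (q : Fin k) (t : ℕ) (ht : t < (L q).length),
      (L q).take (t+1) = (L q).take t ++ [(L q).get ⟨t, ht⟩] := by
    intro q t ht
    rw [List.take_succ, List.getElem?_eq_getElem ht]
    rfl
  have hpart_step : ∀ (q : Fin k) (t : ℕ) (ht : t < (L q).length),
      partialTuple S L q (t+1)
        = Function.update (partialTuple S L q t) q
            (insert ((L q).get ⟨t, ht⟩) (partialTuple S L q t q)) := by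
    intro q t ht
    funext r
    rcases eq_or_ne r q with h | h
    · subst h
      rw [Function.update_self, hpart_q, hpart_q, htake1 r t ht, happend]
    · rw [Function.update_of_ne h]
      simp only [partialTuple, if_neg h]
  have hmarg_part : ∀ (q : Fin k) (t : ℕ) (ht : t < (L q).length),
      f (partialTuple S L q (t+1))
        = f (partialTuple S L q t) + marg f (partialTuple S L q t) q ((L q).get ⟨t, ht⟩) := by
    intro q t ht
    rw [marg, hpart_step q t ht]
    ring
  have hbP_step_keep : ∀ (q : Fin k) (t : ℕ) (ht : t < (L q).length),
      keep q ((L q).get ⟨t, ht⟩) = true →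
      bP q (t+1) = Function.update (bP q t) q
          (insert ((L q).get ⟨t, ht⟩) (bP q t q)) := by
    intro q t ht hk
    funext r
    rcases eq_or_ne r q with h | h
    · subst h
      rw [Function.update_self, hbP_q, hbP_q, htake1 r t ht, List.filter_append]
      have hk' : keep r ((L r)[t]) = true := hk
      have hf : (([(L r).get ⟨t, ht⟩]).filter (keep r)) = [(L r).get ⟨t, ht⟩] := by
        simp [List.filter_cons, hk']
      rw [hf, happend]
    · rw [Function.update_of_ne h]
      simp only [hbP, if_neg h]
  have hbP_step_drop : ∀ (q : Fin k) (t : ℕ) (ht : t < (L q).length),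
      keep q ((L q).get ⟨t, ht⟩) = false →
      bP q (t+1) = bP q t := by
    intro q t ht hk
    funext r
    rcases eq_or_ne r q with h | h
    · subst h
      rw [hbP_q, hbP_q, htake1 r t ht, List.filter_append]
      have hk' : keep r ((L r)[t]) = false := hk
      have hf : (([(L r).get ⟨t, ht⟩]).filter (keep r)) = [] := by
        simp [List.filter_cons, hk']
      rw [hf, List.append_nil]
    · simp only [hbP, if_neg h]
  have hmarg_bP : ∀ (q : Fin k) (t : ℕ) (ht : t < (L q).length),
      keep q ((L q).get ⟨t, ht⟩) = true →
      f (bP q (t+1)) = f (bP q t) + marg f (bP q t) q ((L q).get ⟨t, ht⟩) := by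
    intro q t ht hk
    rw [marg, hbP_step_keep q t ht hk]
    ring
  -- non-membership
  have hnotmem : ∀ (q : Fin k) (t : ℕ) (ht : t < (L q).length) (r : Fin k),
      (L q).get ⟨t, ht⟩ ∉ partialTuple S L q t r := by
    intro q t ht r
    have hiS : (L q).get ⟨t, ht⟩ ∈ S q := by
      rw [← hL q, List.mem_toFinset]
      exact List.get_mem (L q) ⟨t, ht⟩
    simp only [partialTuple]
    split_ifs with h1 h2
    · have hqr : q ≠ r := fun he => by subst he; exact absurd h1 (lt_irrefl q)
      exact Finset.disjoint_left.mp (hS q r hqr) hiS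
    · subst h2
      rw [List.mem_toFinset]
      intro hmem
      obtain ⟨s, hs, hse⟩ := List.getElem_of_mem hmem
      have hst : s < t := by
        have := hs
        simp [List.length_take] at this
        omega
      rw [List.getElem_take] at hse
      have hs' : s < (L r).length := lt_trans hst ht
      have : s = t := by
        have h2 := hse
        rw [List.get_eq_getElem] at h2
        exact (List.Nodup.getElem_inj_iff (hnd r)).mp h2
      omega
    · exact Finset.notMem_empty _
  -- inner induction
  have inner : ∀ (q : Fin k) (t : ℕ), t ≤ (L q).length →
      f (partialTuple S L q t) + f (bP q 0)
        ≤ f (bP q t) + f (partialTuple S L q 0)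
          + ∑ s : Fin (L q).length, (if s.val < t then g q s else 0) := by
    intro q t
    induction t with
    | zero =>
      intro _
      simp only [Nat.not_lt_zero, if_false, Finset.sum_const_zero, add_zero]
      linarith
    | succ t ih =>
      intro ht
      have ht' : t < (L q).length := ht
      have ihh := ih (le_of_lt ht')
      have hsum := sum_if_lt_succ (g q) ht'
      have hgt : g q ⟨t, ht'⟩ = marg f (partialTuple S L q t) q ((L q).get ⟨t, ht'⟩) *
          (if keep q ((L q).get ⟨t, ht'⟩) then 0 else 1) := rfl
      rcases Bool.eq_false_or_eq_true (keep q ((L q).get ⟨t, ht'⟩)) with hk | hk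
      · -- kept element
        have h1 := hmarg_part q t ht'
        have h2 := hmarg_bP q t ht' hk
        have h3 : marg f (partialTuple S L q t) q ((L q).get ⟨t, ht'⟩)
            ≤ marg f (bP q t) q ((L q).get ⟨t, ht'⟩) :=
          marg_antitone hsub (hbP_disj q t) (hpart_disj q t) (hbP_sub q t) (hnotmem q t ht')
        rw [hsum, h1, h2, hgt, hk]
        simp only [if_true, mul_zero]
        linarith
      · -- dropped element
        have h1 := hmarg_part q t ht'
        have h2 := hbP_step_drop q t ht' hk
        rw [hsum, h2, h1, hgt, hk]
        simp only [Bool.false_eq_true, if_false, mul_one]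
        linarith
  -- outer induction
  have outer : ∀ m, m ≤ k →
      f (fun r => if r.val < m then S r else ∅)
        ≤ f (fun r => if r.val < m then B r else ∅)
          + ∑ q : Fin k, (if q.val < m then ∑ s : Fin (L q).length, g q s else 0) := by
    intro m
    induction m with
    | zero =>
      intro _
      simp only [Nat.not_lt_zero, if_false, Finset.sum_const_zero, add_zero]
      exact le_refl _
    | succ m ih =>
      intro hm
      have hmk : m < k := hm
      have ihh := ih (le_of_lt hmk)
      have e1 : partialTuple S L ⟨m, hmk⟩ 0 = (fun r => if r.val < m then S r else ∅) := by
        funext r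
        by_cases h1 : r < (⟨m, hmk⟩ : Fin k)
        · have : r.val < m := h1
          simp [partialTuple, h1, this]
        · have hv : ¬ r.val < m := h1
          by_cases h2 : r = ⟨m, hmk⟩ <;> simp [partialTuple, h1, h2, hv]
      have e2 : partialTuple S L ⟨m, hmk⟩ ((L ⟨m, hmk⟩).length)
          = (fun r => if r.val < m + 1 then S r else ∅) := by
        funext r
        by_cases h1 : r < (⟨m, hmk⟩ : Fin k)
        · have h1' : r.val < m := h1
          have : r.val < m + 1 := by omega
          simp [partialTuple, h1, this]
        · by_cases h2 : r = ⟨m, hmk⟩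
          · subst h2
            simp [partialTuple, List.take_length, hL]
          · have h1' : ¬ r.val < m := h1
            have h2' : r.val ≠ m := fun he => h2 (Fin.ext he)
            have hv : ¬ r.val < m + 1 := by omega
            simp [partialTuple, h1, h2, hv]
      have e3 : bP ⟨m, hmk⟩ 0 = (fun r => if r.val < m then B r else ∅) := by
        funext r
        by_cases h1 : r < (⟨m, hmk⟩ : Fin k)
        · have : r.val < m := h1
          simp [hbP, h1, this]
        · have hv : ¬ r.val < m := h1
          by_cases h2 : r = ⟨m, hmk⟩ <;> simp [hbP, h1, h2, hv]
      have e4 : bP ⟨m, hmk⟩ ((L ⟨m, hmk⟩).length)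
          = (fun r => if r.val < m + 1 then B r else ∅) := by
        funext r
        by_cases h1 : r < (⟨m, hmk⟩ : Fin k)
        · have h1' : r.val < m := h1
          have : r.val < m + 1 := by omega
          simp [hbP, h1, this]
        · by_cases h2 : r = ⟨m, hmk⟩
          · subst h2
            simp [hbP, List.take_length, List.toFinset_filter, hL, hB]
          · have h1' : ¬ r.val < m := h1
            have h2' : r.val ≠ m := fun he => h2 (Fin.ext he)
            have hv : ¬ r.val < m + 1 := by omega
            simp [hbP, h1, h2, hv]
      have hin := inner ⟨m, hmk⟩ ((L ⟨m, hmk⟩).length) (le_refl _)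
      have hfull : (∑ s : Fin (L ⟨m, hmk⟩).length,
          (if s.val < (L ⟨m, hmk⟩).length then g ⟨m, hmk⟩ s else 0))
          = ∑ s : Fin (L ⟨m, hmk⟩).length, g ⟨m, hmk⟩ s := by
        apply Finset.sum_congr rfl
        intro s _
        rw [if_pos s.isLt]
      rw [e1, e2, e3, e4, hfull] at hin
      have hsum := sum_if_lt_succ (fun q : Fin k => ∑ s : Fin (L q).length, g q s) hmk
      rw [hsum]
      linarith
  have hfin := outer k (le_refl k)
  have eS : (fun r : Fin k => if r.val < k then S r else ∅) = S := by
    funext r; rw [if_pos r.isLt]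
  have eB : (fun r : Fin k => if r.val < k then B r else ∅) = B := by
    funext r; rw [if_pos r.isLt]
  have eC : (∑ q : Fin k, (if q.val < k then ∑ s : Fin (L q).length, g q s else 0))
      = ∑ q : Fin k, ∑ s : Fin (L q).length, g q s := by
    apply Finset.sum_congr rfl
    intro q _
    rw [if_pos q.isLt]
  rw [eS, eB, eC] at hfin
  exact hfin

end Key

/-- Theorem 5: the risk-averse (distributionally robust) valid inequality. -/
theorem dra_valid_inequality
    {N : Type*} [Fintype N] [DecidableEq N] {k : ℕ}
    {Ω : Type*} [Fintype Ω]
    (f : Ω → (Fin k → Finset N) → ℝ)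
    (hmono : ∀ ω, KMonotone (f ω)) (hsub : ∀ ω, KSubmodular (f ω))
    (hzero : ∀ ω, f ω (fun _ => ∅) = 0)
    (ξ : Ω → N → Bool)
    (Shat : Ω → Fin k → Finset N) (hShat : ∀ ω, IsKDisjoint (Shat ω))
    (L : Ω → Fin k → List N)
    (hnodup : ∀ ω q, (L ω q).Nodup)
    (hL : ∀ ω q, (L ω q).toFinset = Shat ω q)
    (𝔓 : Set (Ω → ℝ)) (h𝔓ne : 𝔓.Nonempty)
    (h𝔓prob : ∀ p ∈ 𝔓, (∀ ω, 0 ≤ p ω) ∧ ∑ ω, p ω = 1)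
    (phat : Ω → ℝ) (hphat : phat ∈ 𝔓)
    (hargmax : ∀ p ∈ 𝔓, ∑ ω, p ω * f ω (Shat ω) ≤ ∑ ω, phat ω * f ω (Shat ω))
    (x : Fin k → N → Bool)
    (Sbar : Ω → Fin k → Finset N)
    (hSbar : ∀ ω q, Sbar ω q =
      (Shat ω q).filter (fun i => ¬(x q i = true ∧ ξ ω i = true))) :
    sSup ((fun p => ∑ ω, p ω * f ω (Sbar ω)) '' 𝔓)
      ≥ (∑ ω, phat ω * f ω (Shat ω))
        - ∑ q : Fin k, ∑ ω : Ω, ∑ t : Fin (L ω q).length,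
            phat ω * marg (f ω) (partialTuple (Shat ω) (L ω) q t.val) q ((L ω q).get t)
              * (if ξ ω ((L ω q).get t) then (1 : ℝ) else 0)
              * (if x q ((L ω q).get t) then (1 : ℝ) else 0) := by
  classical
  set keep : Ω → Fin k → N → Bool := fun ω q i => !(x q i && ξ ω i) with hkeep
  have hkey : ∀ ω, f ω (Shat ω) ≤ f ω (Sbar ω)
      + ∑ q : Fin k, ∑ t : Fin (L ω q).length,
          marg (f ω) (partialTuple (Shat ω) (L ω) q t.val) q ((L ω q).get t) *
            (if keep ω q ((L ω q).get t) then 0 else 1) := by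
    intro ω
    refine key_ineq (hsub ω) (hzero ω) (Shat ω) (hShat ω) (L ω) (hnodup ω) (hL ω)
      (keep ω) (Sbar ω) ?_
    intro q
    rw [hSbar ω q]
    apply Finset.filter_congr
    intro i _
    cases hx : x q i <;> cases hξ : ξ ω i <;> simp [hkeep, hx, hξ]
  have hphat_nonneg := (h𝔓prob phat hphat).1
  have hbound : (∑ ω, phat ω * f ω (Shat ω))
      - ∑ q : Fin k, ∑ ω : Ω, ∑ t : Fin (L ω q).length,
          phat ω * marg (f ω) (partialTuple (Shat ω) (L ω) q t.val) q ((L ω q).get t)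
            * (if ξ ω ((L ω q).get t) then (1 : ℝ) else 0)
            * (if x q ((L ω q).get t) then (1 : ℝ) else 0)
      ≤ ∑ ω, phat ω * f ω (Sbar ω) := by
    rw [Finset.sum_comm, sub_le_iff_le_add]
    have hstep : ∀ ω ∈ (Finset.univ : Finset Ω), phat ω * f ω (Shat ω)
        ≤ phat ω * f ω (Sbar ω) + ∑ q : Fin k, ∑ t : Fin (L ω q).length,
            phat ω * marg (f ω) (partialTuple (Shat ω) (L ω) q t.val) q ((L ω q).get t)
              * (if ξ ω ((L ω q).get t) then (1 : ℝ) else 0)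
              * (if x q ((L ω q).get t) then (1 : ℝ) else 0) := by
      intro ω _
      have h2 := mul_le_mul_of_nonneg_left (hkey ω) (hphat_nonneg ω)
      rw [mul_add, Finset.mul_sum] at h2
      refine h2.trans_eq ?_
      congr 1
      refine Finset.sum_congr rfl fun q _ => ?_
      rw [Finset.mul_sum]
      refine Finset.sum_congr rfl fun t _ => ?_
      have hgg : (L ω q).get t = (L ω q)[t.val] := rfl
      cases hx : x q ((L ω q)[t.val]) <;> cases hξ : ξ ω ((L ω q)[t.val]) <;>
        simp [hkeep, hgg, hx, hξ] <;> ring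
    calc ∑ ω, phat ω * f ω (Shat ω)
        ≤ ∑ ω, (phat ω * f ω (Sbar ω) + ∑ q : Fin k, ∑ t : Fin (L ω q).length,
            phat ω * marg (f ω) (partialTuple (Shat ω) (L ω) q t.val) q ((L ω q).get t)
              * (if ξ ω ((L ω q).get t) then (1 : ℝ) else 0)
              * (if x q ((L ω q).get t) then (1 : ℝ) else 0)) := Finset.sum_le_sum hstep
      _ = _ := by rw [Finset.sum_add_distrib]
  have hmem : (∑ ω, phat ω * f ω (Sbar ω)) ∈ ((fun p => ∑ ω, p ω * f ω (Sbar ω)) '' 𝔓) :=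
    ⟨phat, hphat, rfl⟩
  have hbdd : BddAbove ((fun p => ∑ ω, p ω * f ω (Sbar ω)) '' 𝔓) := by
    refine ⟨∑ ω, |f ω (Sbar ω)|, ?_⟩
    rintro v ⟨p, hp, rfl⟩
    obtain ⟨hp0, hp1⟩ := h𝔓prob p hp
    apply Finset.sum_le_sum
    intro ω _
    have hple : p ω ≤ 1 := by
      rw [← hp1]
      exact Finset.single_le_sum (fun i _ => hp0 i) (Finset.mem_univ ω)
    calc p ω * f ω (Sbar ω) ≤ p ω * |f ω (Sbar ω)| :=
        mul_le_mul_of_nonneg_left (le_abs_self _) (hp0 ω)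
      _ ≤ 1 * |f ω (Sbar ω)| := mul_le_mul_of_nonneg_right hple (abs_nonneg _)
      _ = _ := one_mul _
  exact le_trans hbound (le_csSup hbdd hmem)
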